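/- arXiv:2306.12250 — 2 statements merged into one kernel-verified Lean document; each statement's English description precedes it below -/
import Mathlib

section
/- For a finite poset P and a finite set G of upsets, if x and y lie in exactly the same members of the Heyting subalgebra of Up(P) generated by G, then x ∼^G_n y for every n; conversely, if x ∼^G_n y for every n then x and y lie in the same members of the subalgebra generated by G. -/
/-- The bisimulation-style relations `∼^G_n` on a preordered set, relative to a
family `G` of subsets. -/
def simRel {α : Type*} [Preorder α] (G : Set (Set α)) : ℕ → α → α → Prop
  | 0 => fun x y => ∀ g ∈ G, (x ∈ g ↔ y ∈ g)
  | n + 1 => fun x y =>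
      (∀ z, x ≤ z → ∃ w, y ≤ w ∧ simRel G n z w) ∧
      (∀ w, y ≤ w → ∃ z, x ≤ z ∧ simRel G n z w)


/-- Heyting implication of subsets of a poset: `U → V = (↓(U \ V))ᶜ`,
equivalently the set of points all of whose successors in `U` lie in `V`. -/
def himpSet {α : Type*} [Preorder α] (U V : Set α) : Set α :=
  {x | ∀ y, x ≤ y → y ∈ U → y ∈ V}

/-- Membership in the Heyting subalgebra of `Up(P)` generated by `G`:
the closure of `G` under `∅`, `univ`, intersection, union and Heyting
implication of upsets. -/
inductive HGen {α : Type*} [Preorder α] (G : Set (Set α)) : Set α → Prop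
  | base {U : Set α} : U ∈ G → HGen G U
  | bot : HGen G ∅
  | top : HGen G Set.univ
  | inf {U V : Set α} : HGen G U → HGen G V → HGen G (U ∩ V)
  | sup {U V : Set α} : HGen G U → HGen G V → HGen G (U ∪ V)
  | himp {U V : Set α} : HGen G U → HGen G V → HGen G (himpSet U V)

/-!
Every member of the generated Heyting subalgebra is built in finitely many steps, and a Heyting
implication costs one extra step of `∼`, so each member is a union of `∼_n`-classes for some `n`.
Conversely, by induction on `n`: if `x ≤ z` and every `w ≥ y` is separated from `z` by some
generated set, then `(⋂ of the generated sets containing z) → (⋃ of those avoiding z)` is generated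
(finitely many sets, as `α` is finite) and contains `y` but not `x`.
-/

section

variable {α : Type*} [Preorder α] {G : Set (Set α)}

namespace simRel

theorem symm : ∀ {n} {x y : α}, simRel G n x y → simRel G n y x
  | 0, _, _, h => fun g hg => (h g hg).symm
  | _ + 1, _, _, ⟨hxy, hyx⟩ =>
    ⟨fun w hw => (hyx w hw).imp fun _ ⟨hz, h⟩ => ⟨hz, h.symm⟩,
      fun z hz => (hxy z hz).imp fun _ ⟨hw, h⟩ => ⟨hw, h.symm⟩⟩

theorem of_succ (hG : ∀ g ∈ G, IsUpperSet g) :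
    ∀ {n} {x y : α}, simRel G (n + 1) x y → simRel G n x y
  | 0, x, y, ⟨hxy, hyx⟩ => fun g hg =>
    have ⟨_, hyw, hxw⟩ := hxy x le_rfl
    have ⟨_, hxz, hzy⟩ := hyx y le_rfl
    ⟨fun hx => (hzy g hg).1 (hG g hg hxz hx), fun hy => (hxw g hg).2 (hG g hg hyw hy)⟩
  | _ + 1, _, _, ⟨hxy, hyx⟩ =>
    ⟨fun z hz => (hxy z hz).imp fun _ ⟨hw, h⟩ => ⟨hw, of_succ hG h⟩,
      fun w hw => (hyx w hw).imp fun _ ⟨hz, h⟩ => ⟨hz, of_succ hG h⟩⟩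

theorem mono (hG : ∀ g ∈ G, IsUpperSet g) {m n : ℕ} (hmn : m ≤ n) {x y : α}
    (h : simRel G n x y) : simRel G m x y := by
  induction hmn with
  | refl => exact h
  | step _ ih => exact ih (of_succ hG h)

end simRel

def SimRelInvariant (G : Set (Set α)) (n : ℕ) (U : Set α) : Prop :=
  ∀ ⦃a b : α⦄, simRel G n a b → (a ∈ U ↔ b ∈ U)

namespace SimRelInvariant

variable {n : ℕ} {U V : Set α}

theorem mono (hG : ∀ g ∈ G, IsUpperSet g) {m : ℕ} (hmn : m ≤ n) (hU : SimRelInvariant G m U) :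
    SimRelInvariant G n U :=
  fun _ _ h => hU (h.mono hG hmn)

theorem inter (hU : SimRelInvariant G n U) (hV : SimRelInvariant G n V) :
    SimRelInvariant G n (U ∩ V) :=
  fun _ _ h => and_congr (hU h) (hV h)

theorem union (hU : SimRelInvariant G n U) (hV : SimRelInvariant G n V) :
    SimRelInvariant G n (U ∪ V) :=
  fun _ _ h => or_congr (hU h) (hV h)

theorem himpSet (hU : SimRelInvariant G n U) (hV : SimRelInvariant G n V) :
    SimRelInvariant G (n + 1) (himpSet U V) := by
  have key : ∀ ⦃a b : α⦄, simRel G (n + 1) a b → a ∈ _root_.himpSet U V →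
      b ∈ _root_.himpSet U V := by
    intro a b hab ha c hbc hcU
    obtain ⟨z, haz, hzc⟩ := hab.2 c hbc
    exact (hV hzc).1 (ha z haz ((hU hzc).2 hcU))
  exact fun a b h => ⟨key h, key h.symm⟩

end SimRelInvariant

theorem HGen.exists_simRelInvariant (hG : ∀ g ∈ G, IsUpperSet g) {U : Set α} (hU : HGen G U) :
    ∃ n, SimRelInvariant G n U := by
  induction hU with
  | base hg => exact ⟨1, fun _ _ h => simRel.of_succ hG h _ hg⟩
  | bot => exact ⟨0, fun _ _ _ => Iff.rfl⟩
  | top => exact ⟨0, fun _ _ _ => Iff.rfl⟩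
  | inf _ _ ihU ihV =>
    obtain ⟨m, hU⟩ := ihU
    obtain ⟨n, hV⟩ := ihV
    exact ⟨max m n, (hU.mono hG (le_max_left m n)).inter (hV.mono hG (le_max_right m n))⟩
  | sup _ _ ihU ihV =>
    obtain ⟨m, hU⟩ := ihU
    obtain ⟨n, hV⟩ := ihV
    exact ⟨max m n, (hU.mono hG (le_max_left m n)).union (hV.mono hG (le_max_right m n))⟩
  | himp _ _ ihU ihV =>
    obtain ⟨m, hU⟩ := ihU
    obtain ⟨n, hV⟩ := ihV
    exact ⟨max m n + 1,
      (hU.mono hG (le_max_left m n)).himpSet (hV.mono hG (le_max_right m n))⟩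

theorem HGen.sInter {S : Set (Set α)} (hS : S.Finite) (h : ∀ U ∈ S, HGen G U) :
    HGen G (⋂₀ S) :=
  InfClosed.sInf_mem (s := {U | HGen G U}) (fun _ hU _ hV => HGen.inf hU hV) hS HGen.top h

theorem HGen.sUnion {S : Set (Set α)} (hS : S.Finite) (h : ∀ U ∈ S, HGen G U) :
    HGen G (⋃₀ S) :=
  SupClosed.sSup_mem (s := {U | HGen G U}) (fun _ hU _ hV => HGen.sup hU hV) hS HGen.bot h

theorem exists_hgen_mem_not_mem_of_le [Finite α] {x y z : α} (hxz : x ≤ z)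
    (hsep : ∀ w, y ≤ w → ∃ U, HGen G U ∧ ¬(z ∈ U ↔ w ∈ U)) :
    ∃ U, HGen G U ∧ y ∈ U ∧ x ∉ U := by
  set A := ⋂₀ {U | HGen G U ∧ z ∈ U}
  set B := ⋃₀ {U | HGen G U ∧ z ∉ U}
  have hzA : z ∈ A := fun _ hU => hU.2
  have hzB : z ∉ B := fun ⟨_, hU, hzU⟩ => hU.2 hzU
  refine ⟨himpSet A B, (HGen.sInter (Set.toFinite _) fun _ hU => hU.1).himp
    (HGen.sUnion (Set.toFinite _) fun _ hU => hU.1), ?_, fun hx => hzB (hx z hxz hzA)⟩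
  intro w hyw hwA
  obtain ⟨U, hU, hzw⟩ := hsep w hyw
  by_cases hzU : z ∈ U
  · exact absurd (iff_of_true hzU (hwA U ⟨hU, hzU⟩)) hzw
  · exact ⟨U, ⟨hU, hzU⟩, by tauto⟩

theorem exists_hgen_not_mem_iff_of_not_simRel [Finite α] :
    ∀ n {x y : α}, ¬simRel G n x y → ∃ U, HGen G U ∧ ¬(x ∈ U ↔ y ∈ U)
  | 0, _, _, h => by
    simp only [simRel, not_forall] at h
    obtain ⟨g, hg, hxy⟩ := h
    exact ⟨g, HGen.base hg, hxy⟩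
  | n + 1, x, y, h => by
    rcases not_and_or.1 h with h | h <;> push Not at h
    · obtain ⟨z, hxz, hz⟩ := h
      obtain ⟨U, hU, hyU, hxU⟩ := exists_hgen_mem_not_mem_of_le hxz fun w hyw =>
        exists_hgen_not_mem_iff_of_not_simRel n (hz w hyw)
      exact ⟨U, hU, by tauto⟩
    · obtain ⟨w, hyw, hw⟩ := h
      obtain ⟨U, hU, hxU, hyU⟩ := exists_hgen_mem_not_mem_of_le hyw fun z hxz =>
        (exists_hgen_not_mem_iff_of_not_simRel n (hw z hxz)).imp fun _ ⟨hU, h⟩ =>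
          ⟨hU, fun h' => h h'.symm⟩
      exact ⟨U, hU, by tauto⟩

end

theorem mem_hgen_iff_simRel_general {α : Type*} [PartialOrder α] [Finite α]
    (G : Set (Set α)) (hG : ∀ g ∈ G, IsUpperSet g)
    (x y : α) :
    (∀ U : Set α, HGen G U → (x ∈ U ↔ y ∈ U)) ↔ (∀ n, simRel G n x y) := by
  constructor
  · intro h n
    by_contra hn
    obtain ⟨U, hU, hxy⟩ := exists_hgen_not_mem_iff_of_not_simRel n hn
    exact hxy (h U hU)
  · intro h U hU
    obtain ⟨n, hn⟩ := hU.exists_simRelInvariant hG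
    exact hn (h n)

/-- In a finite poset, two points lie in exactly the same members of the
Heyting subalgebra generated by a finite family `G` of upsets iff they are
`∼^G_n`-equivalent for every `n`. -/
theorem mem_hgen_iff_simRel {α : Type*} [PartialOrder α] [Finite α]
    (G : Set (Set α)) (hG : ∀ g ∈ G, IsUpperSet g) (hGfin : G.Finite)
    (x y : α) :
    (∀ U : Set α, HGen G U → (x ∈ U ↔ y ∈ U)) ↔ (∀ n, simRel G n x y) :=
  mem_hgen_iff_simRel_general G hG x y
end

section
/- A finite poset P satisfies: the Heyting algebra Up(P) of all upsets is generated by a finite subset G if and only if every point of P is G-isolated, i.e., for all x ≠ y there is n with x ≁^G_n y. -/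
section Preorder

variable {α : Type*} [Preorder α] {G : Set (Set α)}

theorem simRel_refl : ∀ (n : ℕ) (x : α), simRel G n x x
  | 0, _ => fun _ _ => Iff.rfl
  | n + 1, _ => ⟨fun z hz => ⟨z, hz, simRel_refl n z⟩, fun w hw => ⟨w, hw, simRel_refl n w⟩⟩

theorem simRel_symm : ∀ {n : ℕ} {x y : α}, simRel G n x y → simRel G n y x
  | 0, _, _, h => fun g hg => (h g hg).symm
  | _ + 1, _, _, h =>
    ⟨fun z hz => (h.2 z hz).imp fun _ hw => ⟨hw.1, simRel_symm hw.2⟩,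
      fun w hw => (h.1 w hw).imp fun _ hz => ⟨hz.1, simRel_symm hz.2⟩⟩

theorem simRel_of_simRel_succ (hG : ∀ g ∈ G, IsUpperSet g) :
    ∀ {n : ℕ} {x y : α}, simRel G (n + 1) x y → simRel G n x y
  | 0, x, y, h => fun g hg =>
    ⟨fun hx => by
      obtain ⟨z, hxz, hzy⟩ := h.2 y le_rfl
      exact (hzy g hg).1 (hG g hg hxz hx),
    fun hy => by
      obtain ⟨w, hyw, hxw⟩ := h.1 x le_rfl
      exact (hxw g hg).2 (hG g hg hyw hy)⟩
  | _ + 1, _, _, h =>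
    ⟨fun z hz => (h.1 z hz).imp fun _ hw => ⟨hw.1, simRel_of_simRel_succ hG hw.2⟩,
      fun w hw => (h.2 w hw).imp fun _ hz => ⟨hz.1, simRel_of_simRel_succ hG hz.2⟩⟩

theorem simRel_antitone (hG : ∀ g ∈ G, IsUpperSet g) : Antitone (simRel G) :=
  antitone_nat_of_succ_le fun _ _ _ => simRel_of_simRel_succ hG

theorem isUpperSet_himpSet (U V : Set α) : IsUpperSet (himpSet U V) :=
  fun _ _ hxx' hx y hx'y hyU => hx y (hxx'.trans hx'y) hyU

theorem IsUpperSet.biUnion_Ici {U : Set α} (hU : IsUpperSet U) : ⋃ x ∈ U, Set.Ici x = U := by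
  rw [← coe_upperClosure, hU.upperClosure]

theorem HGen.biUnion {ι : Type*} {s : Set ι} (hs : s.Finite) {f : ι → Set α}
    (h : ∀ i ∈ s, HGen G (f i)) : HGen G (⋃ i ∈ s, f i) := by
  induction s, hs using Set.Finite.induction_on with
  | empty => simpa using HGen.bot
  | @insert a s _ _ ih =>
    rw [Set.biUnion_insert]
    exact .sup (h a (s.mem_insert a)) (ih fun i hi => h i (Set.mem_insert_of_mem a hi))

theorem HGen.biInter {ι : Type*} {s : Set ι} (hs : s.Finite) {f : ι → Set α}
    (h : ∀ i ∈ s, HGen G (f i)) : HGen G (⋂ i ∈ s, f i) := by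
  induction s, hs using Set.Finite.induction_on with
  | empty => simpa using HGen.top
  | @insert a s _ _ ih =>
    rw [Set.biInter_insert]
    exact .inf (h a (s.mem_insert a)) (ih fun i hi => h i (Set.mem_insert_of_mem a hi))

theorem HGen.exists_simRel_mem_iff (hG : ∀ g ∈ G, IsUpperSet g) {U : Set α} (hU : HGen G U) :
    ∃ n, ∀ x y, simRel G n x y → (x ∈ U ↔ y ∈ U) := by
  induction hU with
  | base hU => exact ⟨0, fun x y h => h _ hU⟩
  | bot => exact ⟨0, by simp⟩
  | top => exact ⟨0, by simp⟩
  | inf _ _ ihU ihV =>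
    obtain ⟨m, hm⟩ := ihU
    obtain ⟨n, hn⟩ := ihV
    exact ⟨max m n, fun x y h => and_congr
      (hm x y (simRel_antitone hG (le_max_left m n) x y h))
      (hn x y (simRel_antitone hG (le_max_right m n) x y h))⟩
  | sup _ _ ihU ihV =>
    obtain ⟨m, hm⟩ := ihU
    obtain ⟨n, hn⟩ := ihV
    exact ⟨max m n, fun x y h => or_congr
      (hm x y (simRel_antitone hG (le_max_left m n) x y h))
      (hn x y (simRel_antitone hG (le_max_right m n) x y h))⟩
  | @himp U V _ _ ihU ihV =>
    obtain ⟨m, hm⟩ := ihU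
    obtain ⟨n, hn⟩ := ihV
    have himp_of_simRel : ∀ x y, simRel G (max m n + 1) x y →
        x ∈ himpSet U V → y ∈ himpSet U V := by
      intro x y h hx w hyw hwU
      obtain ⟨z, hxz, hzw⟩ := h.2 w hyw
      have hzU : z ∈ U := (hm z w (simRel_antitone hG (le_max_left m n) z w hzw)).2 hwU
      exact (hn z w (simRel_antitone hG (le_max_right m n) z w hzw)).1 (hx z hxz hzU)
    exact ⟨max m n + 1, fun x y h => ⟨himp_of_simRel x y h, himp_of_simRel y x (simRel_symm h)⟩⟩

end Preorder

section PartialOrder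

variable {α : Type*} [PartialOrder α] {G : Set (Set α)}

theorem himpSet_Ici_Ioi (z : α) : himpSet (Set.Ici z) (Set.Ioi z) = (Set.Iic z)ᶜ := by
  ext y
  simp only [himpSet, Set.mem_Ici, Set.mem_Ioi, Set.mem_ofPred_eq, Set.mem_compl_iff,
    Set.mem_Iic]
  refine ⟨fun h hyz => (h z hyz le_rfl).false, fun hyz w hyw hzw => hzw.lt_of_ne ?_⟩
  rintro rfl
  exact hyz hyw

theorem simRel_of_not_le {x : α} {φ : Set α} (hφ : IsUpperSet φ)
    (hbase : ∀ y ∈ φ, ¬ x ≤ y → simRel G 0 x y ∧ ∀ z, x < z → y ≤ z) :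
    ∀ n, ∀ y ∈ φ, ¬ x ≤ y → simRel G n x y := by
  intro n
  induction n with
  | zero => exact fun y hy hxy => (hbase y hy hxy).1
  | succ n ih =>
    intro y hy hxy
    refine ⟨fun z hxz => ?_, fun w hyw => ?_⟩
    · rcases hxz.eq_or_lt with rfl | hxz
      · exact ⟨y, le_rfl, ih y hy hxy⟩
      · exact ⟨z, (hbase y hy hxy).2 z hxz, simRel_refl n z⟩
    · by_cases hxw : x ≤ w
      · exact ⟨w, hxw, simRel_refl n w⟩
      · exact ⟨x, le_rfl, ih w (hφ hyw hy) hxw⟩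

theorem subset_Ici_of_forall_ne {x : α} {φ : Set α}
    (hsep : ∀ y, x ≠ y → ∃ n, ¬ simRel G n x y) (hφ : IsUpperSet φ)
    (hbase : ∀ y ∈ φ, ¬ x ≤ y → simRel G 0 x y ∧ ∀ z, x < z → y ≤ z) :
    φ ⊆ Set.Ici x := by
  intro y hy
  by_contra hxy
  obtain ⟨n, hn⟩ := hsep y (fun h => hxy h.le)
  exact hn (simRel_of_not_le hφ hbase n y hy hxy)

theorem HGen.Ici_of_forall_lt [Finite α] (hG : ∀ g ∈ G, IsUpperSet g) {x : α}
    (hsep : ∀ y, x ≠ y → ∃ n, ¬ simRel G n x y) (ih : ∀ z, x < z → HGen G (Set.Ici z)) :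
    HGen G (Set.Ici x) := by
  have hIoi : ∀ z, x ≤ z → HGen G (Set.Ioi z) := fun z hxz => by
    rw [← (isUpperSet_Ioi (a := z)).biUnion_Ici]
    exact .biUnion (Set.toFinite _) fun u hzu => ih u (hxz.trans_lt hzu)
  set C := ⋂ g ∈ {g ∈ G | x ∈ g}, g
  set A := (⋃ g ∈ {g ∈ G | x ∉ g}, g) ∪ ⋃ z ∈ Set.Ioi x, (Set.Iic z)ᶜ
  have hC : HGen G C := .biInter (Set.toFinite _) fun g hg => .base hg.1
  have hA : HGen G A := .sup (.biUnion (Set.toFinite _) fun g hg => .base hg.1)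
    (.biUnion (Set.toFinite _) fun z hz => himpSet_Ici_Ioi z ▸ .himp (ih z hz) (hIoi z hz.le))
  have hφ : HGen G (C ∩ himpSet A (Set.Ioi x)) := .inf hC (.himp hA (hIoi x le_rfl))
  have mem_C : ∀ y, y ∈ C ↔ ∀ g ∈ G, x ∈ g → y ∈ g := by simp [C]
  have mem_A : ∀ y, y ∈ A ↔ (∃ g ∈ G, x ∉ g ∧ y ∈ g) ∨ ∃ z, x < z ∧ ¬ y ≤ z := by
    simp [A, and_assoc]
  suffices C ∩ himpSet A (Set.Ioi x) = Set.Ici x from this ▸ hφ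
  refine subset_antisymm (subset_Ici_of_forall_ne hsep ?_ ?_) fun y hxy => ⟨?_, ?_⟩
  · exact (isUpperSet_iInter₂ fun g hg => hG g hg.1).inter (isUpperSet_himpSet _ _)
  · rintro y ⟨hyC, hyφ⟩ hxy
    have hyA : y ∉ A := fun hyA => hxy (hyφ y le_rfl hyA).le
    simp only [mem_A, not_or, not_exists, not_and, not_not] at hyA
    exact ⟨fun g hg => ⟨(mem_C y).1 hyC g hg, fun hyg => by_contra fun hxg => hyA.1 g hg hxg hyg⟩,
      hyA.2⟩
  · exact (mem_C y).2 fun g hg hxg => hG g hg hxy hxg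
  · intro w hyw hwA
    refine (hxy.trans hyw).lt_of_ne ?_
    rintro rfl
    rcases (mem_A x).1 hwA with ⟨g, -, hxg, hxg'⟩ | ⟨z, hxz, hxz'⟩
    exacts [hxg hxg', hxz' hxz.le]

theorem HGen.Ici [Finite α] (hG : ∀ g ∈ G, IsUpperSet g)
    (hsep : ∀ x y : α, x ≠ y → ∃ n, ¬ simRel G n x y) (x : α) : HGen G (Set.Ici x) := by
  induction x using WellFoundedGT.induction with
  | _ x ih => exact .Ici_of_forall_lt hG (hsep x) ih

end PartialOrder

theorem upsets_generated_iff_coloured_general {α : Type*} [PartialOrder α] [Finite α]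
    (G : Set (Set α)) (hG : ∀ g ∈ G, IsUpperSet g) :
    (∀ U : Set α, IsUpperSet U → HGen G U) ↔
      (∀ x y : α, x ≠ y → ∃ n, ¬ simRel G n x y) := by
  constructor
  · intro h x y hxy
    have separating : ∃ U, IsUpperSet U ∧ ¬ (x ∈ U ↔ y ∈ U) := by
      by_cases hxy' : x ≤ y
      · exact ⟨Set.Ici y, isUpperSet_Ici y, fun h => hxy (le_antisymm hxy' (h.2 le_rfl))⟩
      · exact ⟨Set.Ici x, isUpperSet_Ici x, fun h => hxy' (h.1 le_rfl)⟩
    obtain ⟨U, hU, hxyU⟩ := separating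
    obtain ⟨n, hn⟩ := (h U hU).exists_simRel_mem_iff hG
    exact ⟨n, fun hsim => hxyU (hn x y hsim)⟩
  · intro hsep U hU
    rw [← hU.biUnion_Ici]
    exact .biUnion (Set.toFinite _) fun x _ => .Ici hG hsep x

/-- A finite poset `P` has its Heyting algebra of upsets generated by a finite
family `G` of upsets iff every point is `G`-isolated, i.e. for all `x ≠ y`
there is `n` with `x ≁^G_n y`. -/
theorem upsets_generated_iff_coloured {α : Type*} [PartialOrder α] [Finite α]
    (G : Set (Set α)) (hG : ∀ g ∈ G, IsUpperSet g) (hGfin : G.Finite) :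
    (∀ U : Set α, IsUpperSet U → HGen G U) ↔
      (∀ x y : α, x ≠ y → ∃ n, ¬ simRel G n x y) :=
  upsets_generated_iff_coloured_general G hG
end
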